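/- The short bispecial factors of u^{(h)} (factors not containing 10) that are strong bispecial are exactly ε and 1^{l_h}; those that are weak bispecial are exactly 0^{m_h - 1} and 1^{n_h - 1}. -/

import Mathlib

/-!
A factor of `u^{(h)}` is a factor of `σ_h(w)` for a factor `w` of `u^{(h+1)}`, and `σ_h(w)` is a
concatenation of sorted blocks `0^{m_h} 1^t` with `t ∈ {l_h, n_h}`, so the block boundaries are
exactly the descents `10`. This pins down the runs of `u^{(h)}`: there is no `0^{m_h+1}` and no
`1^{n_h+1}`, an inner run `1 0^a 1` has `a = m_h`, and an inner run `0 1^b 0` has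
`b ∈ {l_h, n_h}`. Conversely, all the patterns these constraints allow occur in the factor
`σ_h(100) = 0^m 1^n 0^m 1^l 0^m 1^l`. A short factor has the form `0^a 1^b`, and the run
constraints decide which of its four extensions `x 0^a 1^b y` are factors.
-/

/-- The `k`-th power of a finite word `w` (concatenation of `k` copies). -/
def wpow (w : List Bool) (k : ℕ) : List Bool := (List.replicate k w).flatten

/-- The pair of words `(u_i, v_i)`:  `u_0 = 0`, `v_0 = 1`,
`u_{i+1} = u_i^{m_i} v_i^{l_i}`, `v_{i+1} = u_i^{m_i} v_i^{n_i}`. -/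
def uvSeq (l m n : ℕ → ℕ) : ℕ → List Bool × List Bool
  | 0 => ([false], [true])
  | i + 1 =>
      (wpow (uvSeq l m n i).1 (m i) ++ wpow (uvSeq l m n i).2 (l i),
       wpow (uvSeq l m n i).1 (m i) ++ wpow (uvSeq l m n i).2 (n i))

/-- The substitution `σ_h` : `0 ↦ 0^{m_h} 1^{l_h}`, `1 ↦ 0^{m_h} 1^{n_h}`. -/
def subw (l m n : ℕ → ℕ) (h : ℕ) (w : List Bool) : List Bool :=
  w.flatMap fun c => List.replicate (m h) false ++ List.replicate (if c then n h else l h) true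

/-- `wordIter i h = σ_h σ_{h+1} ⋯ σ_{h+i-1}(0)`. -/
def wordIter (l m n : ℕ → ℕ) : ℕ → ℕ → List Bool
  | 0, _ => [false]
  | i + 1, h => subw l m n h (wordIter l m n i (h + 1))

/-- The infinite word `u^{(h)} = lim_i σ_h ⋯ σ_{h+i-1}(0)`. -/
def limWord (l m n : ℕ → ℕ) (h : ℕ) (k : ℕ) : Bool :=
  (wordIter l m n (k + 1) h).getD k false

/-- `w` is a factor of the infinite word `U`. -/
def IsFactor (U : ℕ → Bool) (w : List Bool) : Prop :=
  ∃ k, w = (List.range w.length).map fun j => U (k + j)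

/-- `σ_0 σ_1 ⋯ σ_{h+i-1}` starting at `h`, applied to `w`. -/
def subComp (l m n : ℕ → ℕ) : ℕ → ℕ → List Bool → List Bool
  | 0, _, w => w
  | i + 1, h, w => subw l m n h (subComp l m n i (h + 1) w)

/-- `\hat{σ}_h(w) = 1^{l_h} σ_h(w) 0^{m_h} 1^{l_h}`. -/
def hatw (l m n : ℕ → ℕ) (h : ℕ) (w : List Bool) : List Bool :=
  List.replicate (l h) true ++ subw l m n h w ++
    List.replicate (m h) false ++ List.replicate (l h) true

/-- `hatComp i h w = \hat{σ}_h ⋯ \hat{σ}_{h+i-1}(w)`. -/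
def hatComp (l m n : ℕ → ℕ) : ℕ → ℕ → List Bool → List Bool
  | 0, _, w => w
  | i + 1, h, w => hatw l m n h (hatComp l m n i (h + 1) w)

/-- The complexity function of the infinite word `U`. -/
noncomputable def complexityFn (U : ℕ → Bool) (nn : ℕ) : ℕ :=
  Set.ncard {w : List Bool | w.length = nn ∧ IsFactor U w}

/-- `v` is a strong bispecial factor of `U` : all four extensions `0v0, 0v1, 1v0, 1v1`
are factors. -/
def StrongBS (U : ℕ → Bool) (v : List Bool) : Prop :=
  IsFactor U (false :: v ++ [false]) ∧ IsFactor U (false :: v ++ [true]) ∧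
    IsFactor U (true :: v ++ [false]) ∧ IsFactor U (true :: v ++ [true])

/-- `v` is a weak bispecial factor of `U` : among the four extensions, exactly
`0v0` and `1v1`, or exactly `0v1` and `1v0`, are factors. -/
def WeakBS (U : ℕ → Bool) (v : List Bool) : Prop :=
  (IsFactor U (false :: v ++ [false]) ∧ IsFactor U (true :: v ++ [true]) ∧
      ¬ IsFactor U (false :: v ++ [true]) ∧ ¬ IsFactor U (true :: v ++ [false])) ∨
  (IsFactor U (false :: v ++ [true]) ∧ IsFactor U (true :: v ++ [false]) ∧
      ¬ IsFactor U (false :: v ++ [false]) ∧ ¬ IsFactor U (true :: v ++ [true]))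

theorem isFactor_iff_exists_infix_map_range (U : ℕ → Bool) (w : List Bool) :
    IsFactor U w ↔ ∃ N, w <:+: (List.range N).map U := by
  constructor
  · rintro ⟨k, hk⟩
    refine ⟨k + w.length, ?_⟩
    rw [List.range_add, List.map_append, List.map_map]
    exact hk ▸ List.infix_append_right
  · rintro ⟨N, hw⟩
    obtain ⟨k, hkN, hget⟩ := List.infix_iff_getElem?.mp hw
    rw [List.length_map, List.length_range] at hkN
    refine ⟨k, List.ext_getElem (by simp) fun i hi _ => ?_⟩
    have hi' := hget i hi
    rw [List.getElem?_map, List.getElem?_range (by omega), Option.map_some, Option.some_inj] at hi'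
    simp [← hi', Nat.add_comm]

theorem IsFactor.infix {U : ℕ → Bool} {v w : List Bool} (hw : IsFactor U w) (hvw : v <:+: w) :
    IsFactor U v := by
  obtain ⟨N, hN⟩ := (isFactor_iff_exists_infix_map_range U w).mp hw
  exact (isFactor_iff_exists_infix_map_range U v).mpr ⟨N, hvw.trans hN⟩

section Replicate

variable {α : Type*} (x y : α) {a b c p q : ℕ}

theorem replicate_infix_replicate (ha : a ≤ p) : List.replicate a x <:+: List.replicate p x :=
  List.infix_replicate_iff.mpr ⟨by simpa using ha, by simp⟩

theorem replicate_append_replicate_infix (ha : a ≤ p) (hb : b ≤ q) :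
    List.replicate a x ++ List.replicate b y <:+: List.replicate p x ++ List.replicate q y := by
  refine ⟨List.replicate (p - a) x, List.replicate (q - b) y, ?_⟩
  rw [List.append_assoc, List.append_assoc, List.replicate_append_replicate, ← List.append_assoc,
    List.replicate_append_replicate, Nat.sub_add_cancel ha, Nat.add_sub_cancel' hb]

theorem replicate_append_replicate_append_replicate_infix (ha : a ≤ p) (hc : c ≤ q) :
    List.replicate a x ++ List.replicate b y ++ List.replicate c x <:+:
      List.replicate p x ++ List.replicate b y ++ List.replicate q x := by
  refine ⟨List.replicate (p - a) x, List.replicate (q - c) x, ?_⟩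
  simp only [List.append_assoc, List.replicate_append_replicate]
  rw [← List.append_assoc, List.replicate_append_replicate, Nat.sub_add_cancel ha,
    Nat.add_sub_cancel' hc]

end Replicate

section SortedBoolLists

theorem not_pairwise_of_true_false_infix {v : List Bool} (hv : v.Pairwise (· ≤ ·))
    (h10 : [true, false] <:+: v) : False :=
  absurd (by simpa using hv.sublist h10.sublist) (by decide : ¬ true ≤ false)

theorem pairwise_replicate_false_append_replicate_true (p q : ℕ) :
    (List.replicate p false ++ List.replicate q true).Pairwise (· ≤ ·) :=
  List.pairwise_append.mpr ⟨List.pairwise_replicate.mpr (Or.inr le_rfl),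
    List.pairwise_replicate.mpr (Or.inr le_rfl), by simp [List.mem_replicate]⟩

theorem eq_nil_of_pairwise_append {x d y y' : List Bool} (hxd : (x ++ d).Pairwise (· ≤ ·))
    (hx : true ∈ x) (hd : false :: y = d ++ false :: y') : d = [] := by
  obtain _ | ⟨e, d⟩ := d
  · rfl
  · obtain ⟨rfl, -⟩ := List.cons_eq_cons.mp hd
    exact absurd (List.pairwise_append.mp hxd |>.2.2 true hx false List.mem_cons_self) (by decide)

/-- The cut sits at the first descent `true, false` of the word, so it is unique. -/
theorem eq_of_append_false_cons_eq {x x' y y' : List Bool}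
    (h : x ++ false :: y = x' ++ false :: y') (hx : x.Pairwise (· ≤ ·))
    (hx' : x'.Pairwise (· ≤ ·)) (htx : true ∈ x) (htx' : true ∈ x') : x = x' := by
  rcases List.append_eq_append_iff.mp h with ⟨d, rfl, hd⟩ | ⟨d, rfl, hd⟩
  · rw [eq_nil_of_pairwise_append hx' htx hd, List.append_nil]
  · rw [eq_nil_of_pairwise_append hx htx' hd, List.append_nil]

theorem eq_of_false_cons_replicate_true_suffix {b p q : ℕ}
    (hs : false :: List.replicate b true <:+ List.replicate p false ++ List.replicate q true) :
    b = q := by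
  obtain ⟨s, hs⟩ := hs
  have hsorted := hs ▸ pairwise_replicate_false_append_replicate_true p q
  have hs_false : true ∉ s := fun ht =>
    absurd (List.pairwise_append.mp hsorted |>.2.2 true ht false List.mem_cons_self) (by decide)
  simpa [List.count_replicate, List.count_eq_zero.mpr hs_false] using
    congrArg (List.count true) hs

theorem exists_eq_replicate_append_replicate {v : List Bool} (hv : ¬ [true, false] <:+: v) :
    ∃ a b, v = List.replicate a false ++ List.replicate b true := by
  induction v with
  | nil => exact ⟨0, 0, rfl⟩
  | cons c v ih =>
    obtain ⟨a, b, rfl⟩ := ih fun h10 => hv (h10.trans (List.infix_cons List.infix_rfl))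
    cases c
    · exact ⟨a + 1, b, rfl⟩
    · obtain _ | a := a
      · exact ⟨0, b + 1, rfl⟩
      · exact absurd ⟨[], List.replicate a false ++ List.replicate b true, rfl⟩ hv

theorem eq_replicate_cases_of_not_true_false_infix {v : List Bool}
    (hv : ¬ [true, false] <:+: v) :
    (∃ b, v = List.replicate b true) ∨ (∃ a, 1 ≤ a ∧ v = List.replicate a false) ∨
      ∃ a b, 1 ≤ a ∧ 1 ≤ b ∧ v = List.replicate a false ++ List.replicate b true := by
  obtain ⟨a, b, rfl⟩ := exists_eq_replicate_append_replicate hv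
  obtain rfl | ha := Nat.eq_zero_or_pos a
  · exact Or.inl ⟨b, rfl⟩
  obtain rfl | hb := Nat.eq_zero_or_pos b
  · exact Or.inr (Or.inl ⟨a, ha, List.append_nil _⟩)
  · exact Or.inr (Or.inr ⟨a, b, ha, hb, rfl⟩)

end SortedBoolLists

/-- `block l m n h c` is `σ_h(c)`. -/
def block (l m n : ℕ → ℕ) (h : ℕ) (c : Bool) : List Bool :=
  List.replicate (m h) false ++ List.replicate (if c then n h else l h) true

section Substitution

variable {l m n : ℕ → ℕ} {h : ℕ}

theorem block_false :
    block l m n h false = List.replicate (m h) false ++ List.replicate (l h) true := rfl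

theorem block_true :
    block l m n h true = List.replicate (m h) false ++ List.replicate (n h) true := rfl

theorem count_false_block (c : Bool) : (block l m n h c).count false = m h := by
  simp [block, List.count_replicate]

theorem count_true_block (c : Bool) :
    (block l m n h c).count true = if c then n h else l h := by
  simp [block, List.count_replicate]

theorem pairwise_block (c : Bool) : (block l m n h c).Pairwise (· ≤ ·) :=
  pairwise_replicate_false_append_replicate_true _ _

theorem subw_nil : subw l m n h [] = [] := rfl

theorem subw_cons (c : Bool) (w : List Bool) :
    subw l m n h (c :: w) = block l m n h c ++ subw l m n h w := rfl

theorem subw_append (u v : List Bool) :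
    subw l m n h (u ++ v) = subw l m n h u ++ subw l m n h v :=
  List.flatMap_append

theorem subw_infix_subw {u v : List Bool} (huv : u <:+: v) :
    subw l m n h u <:+: subw l m n h v := by
  obtain ⟨s, t, rfl⟩ := huv
  rw [subw_append, subw_append]
  exact List.infix_append _ _ _

theorem length_mul_le_length_subw (w : List Bool) :
    w.length * m h ≤ (subw l m n h w).length := by
  induction w with
  | nil => simp [subw_nil]
  | cons c w ih =>
    rw [subw_cons, List.length_append, block, List.length_append, List.length_replicate,
      List.length_cons, Nat.succ_mul]
    omega

theorem lt_length_wordIter (hm : ∀ i, 2 ≤ m i) (i h : ℕ) :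
    i < (wordIter l m n i h).length := by
  induction i generalizing h with
  | zero => simp [wordIter]
  | succ i ih =>
    have hlen := length_mul_le_length_subw (l := l) (m := m) (n := n) (h := h)
      (wordIter l m n i (h + 1))
    have hdouble := Nat.mul_le_mul_left (wordIter l m n i (h + 1)).length (hm h)
    have := ih (h + 1)
    rw [wordIter]
    omega

theorem wordIter_prefix_wordIter_succ (hm : ∀ i, 1 ≤ m i) (i h : ℕ) :
    wordIter l m n i h <+: wordIter l m n (i + 1) h := by
  induction i generalizing h with
  | zero =>
    obtain ⟨k, hk⟩ := Nat.exists_eq_add_of_le' (hm h)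
    simp [wordIter, subw, hk, List.replicate_succ]
  | succ i ih =>
    obtain ⟨t, ht⟩ := ih (h + 1)
    exact ⟨subw l m n h t, by rw [wordIter, wordIter, ← subw_append, ht]⟩

theorem wordIter_prefix_wordIter (hm : ∀ i, 1 ≤ m i) {i j : ℕ} (hij : i ≤ j) (h : ℕ) :
    wordIter l m n i h <+: wordIter l m n j h := by
  induction j, hij using Nat.le_induction with
  | base => exact List.prefix_refl _
  | succ j _ ih => exact ih.trans (wordIter_prefix_wordIter_succ hm j h)

theorem map_range_limWord (hm : ∀ i, 2 ≤ m i) (i h : ℕ) :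
    (List.range (wordIter l m n i h).length).map (limWord l m n h) = wordIter l m n i h := by
  have hm1 : ∀ i, 1 ≤ m i := fun i => (hm i).trans' one_le_two
  refine List.ext_getElem (by simp) fun k hk _ => ?_
  have hk' : k < (wordIter l m n (k + 1) h).length :=
    (lt_length_wordIter hm (k + 1) h).trans' k.lt_succ_self
  rw [List.getElem_map, List.getElem_range, limWord, List.getD_eq_getElem _ _ hk']
  rcases le_total (k + 1) i with hki | hik
  · exact (wordIter_prefix_wordIter hm1 hki h).getElem _
  · exact ((wordIter_prefix_wordIter hm1 hik h).getElem _).symm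

theorem isFactor_limWord_iff (hm : ∀ i, 2 ≤ m i) (h : ℕ) (w : List Bool) :
    IsFactor (limWord l m n h) w ↔ ∃ i, w <:+: wordIter l m n i h := by
  rw [isFactor_iff_exists_infix_map_range]
  constructor
  · rintro ⟨N, hN⟩
    have hrange : List.range N <+: List.range (wordIter l m n N h).length := by
      simpa [(lt_length_wordIter hm N h).le] using
        List.take_prefix N (List.range (wordIter l m n N h).length)
    exact ⟨N, hN.trans ((map_range_limWord hm N h ▸ hrange.map _).isInfix)⟩
  · rintro ⟨i, hi⟩
    exact ⟨_, (map_range_limWord hm i h).symm ▸ hi⟩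

theorem isFactor_singleton_false (hm : ∀ i, 2 ≤ m i) (h : ℕ) :
    IsFactor (limWord l m n h) [false] :=
  (isFactor_limWord_iff hm h _).mpr ⟨0, List.infix_refl _⟩

theorem isFactor_subw (hm : ∀ i, 2 ≤ m i) {w : List Bool}
    (hw : IsFactor (limWord l m n (h + 1)) w) : IsFactor (limWord l m n h) (subw l m n h w) := by
  obtain ⟨i, hi⟩ := (isFactor_limWord_iff hm _ w).mp hw
  exact (isFactor_limWord_iff hm h _).mpr ⟨i + 1, subw_infix_subw hi⟩

theorem exists_infix_subw_of_isFactor (hm : ∀ i, 2 ≤ m i) {u : List Bool}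
    (hu : IsFactor (limWord l m n h) u) : ∃ w, u <:+: subw l m n h w := by
  obtain ⟨i, hi⟩ := (isFactor_limWord_iff hm h u).mp hu
  have hm1 : ∀ i, 1 ≤ m i := fun i => (hm i).trans' one_le_two
  exact ⟨_, hi.trans (wordIter_prefix_wordIter_succ hm1 i h).isInfix⟩

end Substitution

section Positive

variable {l m n : ℕ → ℕ} {h : ℕ}

theorem isFactor_subw_true_false_false (hm : ∀ i, 2 ≤ m i) (hl : ∀ i, 1 ≤ l i) (h : ℕ) :
    IsFactor (limWord l m n h) (subw l m n h [true, false, false]) := by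
  have h01 : IsFactor (limWord l m n (h + 2)) [false, true] :=
    (isFactor_subw hm (isFactor_singleton_false hm (h + 3))).infix (by
      simpa [subw_cons, subw_nil, block_false] using
        replicate_append_replicate_infix false true ((hm (h + 2)).trans' one_le_two) (hl (h + 2)))
  refine isFactor_subw hm ((isFactor_subw hm h01).infix ?_)
  have h100 := replicate_append_replicate_infix true false (hl (h + 1)) (hm (h + 1))
  simp only [List.replicate_one, List.singleton_append] at h100
  exact h100.trans ⟨List.replicate (m (h + 1)) false, List.replicate (n (h + 1)) true, by
    simp [subw_cons, subw_nil, block_false, block_true]⟩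

theorem isFactor_replicate_false_append_replicate_true (hm : ∀ i, 2 ≤ m i) (hl : ∀ i, 1 ≤ l i)
    {a b : ℕ} (ha : a ≤ m h) (hb : b ≤ n h) :
    IsFactor (limWord l m n h) (List.replicate a false ++ List.replicate b true) :=
  (isFactor_subw_true_false_false hm hl h).infix
    ((replicate_append_replicate_infix false true ha hb).trans
      ⟨[], subw l m n h [false, false], by simp [subw_cons, block_true]⟩)

theorem isFactor_replicate_true_append_replicate_false (hm : ∀ i, 2 ≤ m i) (hl : ∀ i, 1 ≤ l i)
    {a b : ℕ} (ha : a ≤ m h) (hb : b ≤ n h) :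
    IsFactor (limWord l m n h) (List.replicate b true ++ List.replicate a false) :=
  (isFactor_subw_true_false_false hm hl h).infix
    ((replicate_append_replicate_infix true false hb ha).trans
      ⟨List.replicate (m h) false, List.replicate (l h) true ++ subw l m n h [false], by
        simp [subw_cons, block_true, block_false]⟩)

theorem isFactor_true_replicate_false_true (hm : ∀ i, 2 ≤ m i) (hl : ∀ i, 1 ≤ l i)
    (hn : 1 ≤ n h) : IsFactor (limWord l m n h) (true :: List.replicate (m h) false ++ [true]) := by
  have h101 := replicate_append_replicate_append_replicate_infix true false hn (hl h) (b := m h)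
  simp only [List.replicate_one, List.singleton_append] at h101
  exact (isFactor_subw_true_false_false hm hl h).infix (h101.trans
    ⟨List.replicate (m h) false, List.replicate (m h) false ++ List.replicate (l h) true, by
      simp [subw_cons, subw_nil, block_true, block_false]⟩)

theorem isFactor_false_replicate_true_false (hm : ∀ i, 2 ≤ m i) (hl : ∀ i, 1 ≤ l i)
    {b : ℕ} (hb : b = l h ∨ b = n h) :
    IsFactor (limWord l m n h) (false :: List.replicate b true ++ [false]) := by
  have hm1 : 1 ≤ m h := (hm h).trans' one_le_two
  have h010 := replicate_append_replicate_append_replicate_infix false true hm1 hm1 (b := b)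
  simp only [List.replicate_one, List.singleton_append] at h010
  refine (isFactor_subw_true_false_false hm hl h).infix (h010.trans ?_)
  rcases hb with rfl | rfl
  · exact ⟨block l m n h true, List.replicate (l h) true, by
      simp [subw_cons, subw_nil, block_true, block_false]⟩
  · exact ⟨[], List.replicate (l h) true ++ subw l m n h [false], by
      simp [subw_cons, block_true, block_false]⟩

end Positive

section Negative

variable {l m n : ℕ → ℕ} {h : ℕ}

theorem true_mem_of_suffix_block (hl : 1 ≤ l h) (hn : 1 ≤ n h) {c : Bool} {x : List Bool}
    (hx : x <:+ block l m n h c) (hne : x ≠ []) : true ∈ x := by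
  have hT : 1 ≤ (if c then n h else l h) := by cases c <;> assumption
  have hlast : x.getLast hne = true := by
    rw [hx.getLast hne]
    simp only [block]
    rw [List.getLast_append_right (by rw [Ne, List.replicate_eq_nil_iff]; omega),
      List.getLast_replicate]
  exact hlast ▸ List.getLast_mem hne

/-- An infix of `σ_h(w)` lies inside one block, or it crosses a block boundary, which is a
descent `true, false`. -/
theorem infix_subw_cases (hm : 1 ≤ m h) (hl : 1 ≤ l h) (hn : 1 ≤ n h) {u w : List Bool}
    (hu : u <:+: subw l m n h w) :
    (∃ c, u <:+: block l m n h c) ∨ ∃ c x y z, u = x ++ false :: y ∧ x <:+ block l m n h c ∧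
      true ∈ x ∧ false :: y <+: List.replicate (m h) false ++ z := by
  induction w with
  | nil => exact Or.inl ⟨false, List.eq_nil_of_infix_nil hu ▸ List.nil_infix⟩
  | cons c w ih =>
    rw [subw_cons] at hu
    rcases List.infix_append_iff_ne_nil.mp hu with hc | hw | ⟨x, y, hx, hy, rfl, hxc, hyw⟩
    · exact Or.inl ⟨c, hc⟩
    · exact ih hw
    · obtain _ | ⟨c', w'⟩ := w
      · exact absurd (List.eq_nil_of_prefix_nil hyw) hy
      obtain _ | ⟨e, y⟩ := y
      · exact absurd rfl hy
      rw [subw_cons, block, List.append_assoc] at hyw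
      obtain rfl : e = false := by
        obtain ⟨k, hk⟩ := Nat.exists_eq_add_of_le' hm
        rw [hk, List.replicate_succ, List.cons_append] at hyw
        exact (List.cons_prefix_cons.mp hyw).1
      exact Or.inr ⟨c, x, y, _, rfl, hxc, true_mem_of_suffix_block hl hn hxc hx, hyw⟩

theorem not_replicate_false_infix_subw (hm : 1 ≤ m h) (hl : 1 ≤ l h) (hn : 1 ≤ n h)
    (w : List Bool) : ¬ List.replicate (m h + 1) false <:+: subw l m n h w := by
  intro hu
  rcases infix_subw_cases hm hl hn hu with ⟨c, hc⟩ | ⟨c, x, y, z, hxy, -, htx, -⟩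
  · have hcount := hc.count_le false
    rw [count_false_block, List.count_replicate_self] at hcount
    omega
  · have htrue : true ∈ List.replicate (m h + 1) false := hxy ▸ List.mem_append_left _ htx
    simp [List.mem_replicate] at htrue

theorem not_replicate_true_infix_subw (hm : 1 ≤ m h) (hl : 1 ≤ l h) (hln : l h ≤ n h)
    (w : List Bool) : ¬ List.replicate (n h + 1) true <:+: subw l m n h w := by
  intro hu
  rcases infix_subw_cases hm hl (hl.trans hln) hu with ⟨c, hc⟩ | ⟨c, x, y, z, hxy, -, -, -⟩
  · have hcount := hc.count_le true
    rw [count_true_block, List.count_replicate_self] at hcount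
    split at hcount <;> omega
  · have hfalse : false ∈ List.replicate (n h + 1) true :=
      hxy ▸ List.mem_append_right _ List.mem_cons_self
    simp [List.mem_replicate] at hfalse

theorem not_true_replicate_false_true_infix_subw (hm : 1 ≤ m h) (hl : 1 ≤ l h) (hn : 1 ≤ n h)
    {a : ℕ} (ha : 1 ≤ a) (haM : a < m h) (w : List Bool) :
    ¬ true :: List.replicate a false ++ [true] <:+: subw l m n h w := by
  intro hu
  obtain ⟨a, rfl⟩ := Nat.exists_eq_add_of_le' ha
  rcases infix_subw_cases hm hl hn hu with ⟨c, hc⟩ | ⟨c, x, y, z, hxy, hxc, htx, hyz⟩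
  · have h10 : [true, false] <:+: true :: List.replicate (a + 1) false ++ [true] :=
      ⟨[], List.replicate a false ++ [true], by simp [List.replicate_succ]⟩
    exact not_pairwise_of_true_false_infix (pairwise_block c) (h10.trans hc)
  · have hcut : true :: List.replicate (a + 1) false ++ [true] =
        [true] ++ false :: (List.replicate a false ++ [true]) := by
      simp [List.replicate_succ]
    rw [hcut] at hxy
    obtain rfl := eq_of_append_false_cons_eq hxy.symm
      ((pairwise_block c).sublist hxc.sublist) (by simp) htx (by simp)
    obtain rfl := List.cons_injective (List.append_cancel_left hxy)
    have hlast := hyz.getElem (i := a + 1) (by simp)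
    simp [List.getElem_replicate, haM] at hlast

theorem eq_of_false_replicate_true_false_infix_subw (hm : 1 ≤ m h) (hl : 1 ≤ l h)
    (hn : 1 ≤ n h) {b : ℕ} (hb : 1 ≤ b) {w : List Bool}
    (hu : false :: List.replicate b true ++ [false] <:+: subw l m n h w) :
    b = l h ∨ b = n h := by
  obtain ⟨b, rfl⟩ := Nat.exists_eq_add_of_le' hb
  rcases infix_subw_cases hm hl hn hu with ⟨c, hc⟩ | ⟨c, x, y, z, hxy, hxc, htx, -⟩
  · have h10 : [true, false] <:+: false :: List.replicate (b + 1) true ++ [false] :=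
      ⟨false :: List.replicate b true, [], by simp [List.replicate_succ']⟩
    exact (not_pairwise_of_true_false_infix (pairwise_block c) (h10.trans hc)).elim
  · obtain rfl := eq_of_append_false_cons_eq hxy.symm
      ((pairwise_block c).sublist hxc.sublist) (by simp) htx (by simp)
    have hrun := eq_of_false_cons_replicate_true_suffix hxc
    cases c
    exacts [Or.inl hrun, Or.inr hrun]

end Negative

section Runs

variable {l m n : ℕ → ℕ} {h : ℕ}

theorem le_of_isFactor_replicate_false (hm : ∀ i, 2 ≤ m i) (hl : 1 ≤ l h) (hn : 1 ≤ n h)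
    {a : ℕ} (hf : IsFactor (limWord l m n h) (List.replicate a false)) : a ≤ m h := by
  by_contra! ha
  obtain ⟨w, hw⟩ := exists_infix_subw_of_isFactor hm
    (hf.infix (replicate_infix_replicate false ha))
  exact not_replicate_false_infix_subw ((hm h).trans' one_le_two) hl hn w hw

theorem le_of_isFactor_replicate_true (hm : ∀ i, 2 ≤ m i) (hl : 1 ≤ l h) (hln : l h ≤ n h)
    {b : ℕ} (hf : IsFactor (limWord l m n h) (List.replicate b true)) : b ≤ n h := by
  by_contra! hb
  obtain ⟨w, hw⟩ := exists_infix_subw_of_isFactor hm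
    (hf.infix (replicate_infix_replicate true hb))
  exact not_replicate_true_infix_subw ((hm h).trans' one_le_two) hl hln w hw

theorem isFactor_replicate_false_append_replicate_true_iff (hm : ∀ i, 2 ≤ m i)
    (hl : ∀ i, 1 ≤ l i) (hln : l h ≤ n h) {a b : ℕ} :
    IsFactor (limWord l m n h) (List.replicate a false ++ List.replicate b true) ↔
      a ≤ m h ∧ b ≤ n h :=
  ⟨fun hf => ⟨le_of_isFactor_replicate_false hm (hl h) ((hl h).trans hln)
      (hf.infix List.infix_append_left),
    le_of_isFactor_replicate_true hm (hl h) hln (hf.infix List.infix_append_right)⟩,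
    fun hab => isFactor_replicate_false_append_replicate_true hm hl hab.1 hab.2⟩

theorem isFactor_true_replicate_false_true_iff (hm : ∀ i, 2 ≤ m i) (hl : ∀ i, 1 ≤ l i)
    (hn : 1 ≤ n h) {a : ℕ} (ha : 1 ≤ a) :
    IsFactor (limWord l m n h) (true :: List.replicate a false ++ [true]) ↔ a = m h := by
  constructor
  · intro hf
    obtain ⟨w, hw⟩ := exists_infix_subw_of_isFactor hm hf
    have haM : a ≤ m h :=
      le_of_isFactor_replicate_false hm (hl h) hn (hf.infix ⟨[true], [true], rfl⟩)
    by_contra hne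
    exact not_true_replicate_false_true_infix_subw ((hm h).trans' one_le_two) (hl h) hn ha
      (lt_of_le_of_ne haM hne) w hw
  · rintro rfl
    exact isFactor_true_replicate_false_true hm hl hn

theorem isFactor_false_replicate_true_false_iff (hm : ∀ i, 2 ≤ m i) (hl : ∀ i, 1 ≤ l i)
    (hn : 1 ≤ n h) {b : ℕ} :
    IsFactor (limWord l m n h) (false :: List.replicate b true ++ [false]) ↔
      b = 0 ∨ b = l h ∨ b = n h := by
  constructor
  · intro hf
    rcases Nat.eq_zero_or_pos b with rfl | hb
    · exact Or.inl rfl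
    obtain ⟨w, hw⟩ := exists_infix_subw_of_isFactor hm hf
    exact Or.inr (eq_of_false_replicate_true_false_infix_subw ((hm h).trans' one_le_two) (hl h)
      hn hb hw)
  · rintro (rfl | hb)
    · simpa using isFactor_replicate_false_append_replicate_true hm hl (hm h) (Nat.zero_le (n h))
    · exact isFactor_false_replicate_true_false hm hl hb

end Runs

section Bispecial

variable {l m n : ℕ → ℕ} {h : ℕ}

theorem bispecial_replicate_true (hm : ∀ i, 2 ≤ m i) (hl : ∀ i, 1 ≤ l i) (hlm : l h < m h)
    (hmn : m h < n h) (b : ℕ) :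
    (StrongBS (limWord l m n h) (List.replicate b true) ↔ b = 0 ∨ b = l h) ∧
      (WeakBS (limWord l m n h) (List.replicate b true) ↔ b = n h - 1) := by
  have hln : l h ≤ n h := by omega
  have h00 := isFactor_false_replicate_true_false_iff hm hl (hl h |>.trans hln) (b := b)
  have h01 : IsFactor (limWord l m n h) (false :: List.replicate b true ++ [true]) ↔
      b + 1 ≤ n h := by
    have e : false :: List.replicate b true ++ [true] =
        List.replicate 1 false ++ List.replicate (b + 1) true := by simp [List.replicate_succ']
    rw [e, isFactor_replicate_false_append_replicate_true_iff hm hl hln]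
    omega
  have h10 : IsFactor (limWord l m n h) (true :: List.replicate b true ++ [false]) ↔
      b + 1 ≤ n h := by
    have e : true :: List.replicate b true ++ [false] =
        List.replicate (b + 1) true ++ List.replicate 1 false := rfl
    rw [e]
    exact ⟨fun hf => le_of_isFactor_replicate_true hm (hl h) hln (hf.infix List.infix_append_left),
      isFactor_replicate_true_append_replicate_false hm hl ((hm h).trans' one_le_two)⟩
  have h11 : IsFactor (limWord l m n h) (true :: List.replicate b true ++ [true]) ↔
      b + 2 ≤ n h := by
    have e : true :: List.replicate b true ++ [true] =
        List.replicate 0 false ++ List.replicate (b + 2) true := by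
      rw [List.replicate_succ' (n := b + 1), List.replicate_succ]
      rfl
    rw [e, isFactor_replicate_false_append_replicate_true_iff hm hl hln]
    omega
  simp only [StrongBS, WeakBS, h00, h01, h10, h11]
  omega

theorem bispecial_replicate_false (hm : ∀ i, 2 ≤ m i) (hl : ∀ i, 1 ≤ l i) (hln : l h ≤ n h)
    {a : ℕ} (ha : 1 ≤ a) :
    ¬ StrongBS (limWord l m n h) (List.replicate a false) ∧
      (WeakBS (limWord l m n h) (List.replicate a false) ↔ a = m h - 1) := by
  have hn : 1 ≤ n h := (hl h).trans hln
  have h00 : IsFactor (limWord l m n h) (false :: List.replicate a false ++ [false]) ↔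
      a + 2 ≤ m h := by
    have e : false :: List.replicate a false ++ [false] =
        List.replicate (a + 2) false ++ List.replicate 0 true := by
      rw [List.replicate_zero, List.append_nil, List.replicate_succ' (n := a + 1),
        List.replicate_succ]
    rw [e, isFactor_replicate_false_append_replicate_true_iff hm hl hln]
    omega
  have h01 : IsFactor (limWord l m n h) (false :: List.replicate a false ++ [true]) ↔
      a + 1 ≤ m h := by
    have e : false :: List.replicate a false ++ [true] =
        List.replicate (a + 1) false ++ List.replicate 1 true := rfl
    rw [e, isFactor_replicate_false_append_replicate_true_iff hm hl hln]
    omega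
  have h10 : IsFactor (limWord l m n h) (true :: List.replicate a false ++ [false]) ↔
      a + 1 ≤ m h := by
    have e : true :: List.replicate a false ++ [false] =
        List.replicate 1 true ++ List.replicate (a + 1) false := by
      simp [List.replicate_succ']
    rw [e]
    exact ⟨fun hf => le_of_isFactor_replicate_false hm (hl h) hn
        (hf.infix List.infix_append_right),
      fun ha => isFactor_replicate_true_append_replicate_false hm hl ha hn⟩
  have h11 := isFactor_true_replicate_false_true_iff hm hl hn ha
  simp only [StrongBS, WeakBS, h00, h01, h10, h11]
  omega

theorem not_bispecial_replicate_false_append_replicate_true (hm : ∀ i, 2 ≤ m i)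
    (hl : ∀ i, 1 ≤ l i) (hn : 1 ≤ n h) {a b : ℕ} (ha : 1 ≤ a) (hb : 1 ≤ b) :
    ¬ StrongBS (limWord l m n h) (List.replicate a false ++ List.replicate b true) ∧
      ¬ WeakBS (limWord l m n h) (List.replicate a false ++ List.replicate b true) := by
  obtain ⟨b, rfl⟩ := Nat.exists_eq_add_of_le' hb
  set v := List.replicate a false ++ List.replicate (b + 1) true
  have hext : ∀ x y, IsFactor (limWord l m n h) (false :: v ++ [x]) →
      IsFactor (limWord l m n h) (true :: v ++ [y]) → False := by
    intro x y h0 h1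
    have hlt : a + 1 ≤ m h := le_of_isFactor_replicate_false hm (hl h) hn
      (h0.infix ⟨[], List.replicate (b + 1) true ++ [x], by simp [v, List.replicate_succ]⟩)
    have heq : a = m h := (isFactor_true_replicate_false_true_iff hm hl hn ha).mp
      (h1.infix ⟨[], List.replicate b true ++ [y], by simp [v, List.replicate_succ]⟩)
    omega
  constructor
  · rintro ⟨h00, -, -, h11⟩
    exact hext _ _ h00 h11
  · rintro (⟨h00, h11, -, -⟩ | ⟨h01, h10, -, -⟩)
    exacts [hext _ _ h00 h11, hext _ _ h01 h10]

end Bispecial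

theorem stmt16 (l m n : ℕ → ℕ) (hlpos : ∀ i, 0 < l i)
    (hlm : ∀ i, l i < m i) (hmn : ∀ i, m i < n i) (h : ℕ) :
    (∀ v : List Bool, IsFactor (limWord l m n h) v → ¬ [true, false] <:+: v →
        (StrongBS (limWord l m n h) v ↔ (v = [] ∨ v = List.replicate (l h) true))) ∧
      (∀ v : List Bool, IsFactor (limWord l m n h) v → ¬ [true, false] <:+: v →
        (WeakBS (limWord l m n h) v ↔
          (v = List.replicate (m h - 1) false ∨ v = List.replicate (n h - 1) true))) := by
  have hm : ∀ i, 2 ≤ m i := fun i => lt_of_le_of_lt (hlpos i) (hlm i)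
  have hmh := hm h
  have hln : l h ≤ n h := ((hlm h).trans (hmn h)).le
  suffices ∀ v : List Bool, ¬ [true, false] <:+: v →
      (StrongBS (limWord l m n h) v ↔ (v = [] ∨ v = List.replicate (l h) true)) ∧
      (WeakBS (limWord l m n h) v ↔
        (v = List.replicate (m h - 1) false ∨ v = List.replicate (n h - 1) true)) from
    ⟨fun v _ hv => (this v hv).1, fun v _ hv => (this v hv).2⟩
  intro v hv
  rcases eq_replicate_cases_of_not_true_false_infix hv with
    ⟨b, rfl⟩ | ⟨a, ha, rfl⟩ | ⟨a, b, ha, hb, rfl⟩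
  · obtain ⟨hS, hW⟩ := bispecial_replicate_true hm hlpos (hlm h) (hmn h) b
    rw [hS, hW]
    simp only [List.replicate_eq_nil_iff, List.replicate_inj, Bool.true_eq_false, or_false,
      or_true, and_true, true_and]
    omega
  · obtain ⟨hS, hW⟩ := bispecial_replicate_false hm hlpos hln ha
    rw [iff_false_intro hS, hW]
    simp only [List.replicate_eq_nil_iff, List.replicate_inj, Bool.false_eq_true, or_false,
      or_true, and_true, false_iff]
    omega
  · obtain ⟨hS, hW⟩ := not_bispecial_replicate_false_append_replicate_true hm hlpos
      ((hlpos h).trans_le hln) ha hb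
    simp [hS, hW, List.append_eq_replicate_iff, Nat.one_le_iff_ne_zero.mp ha,
      Nat.one_le_iff_ne_zero.mp hb]
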